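/- Let 𝒴 be a measurable space, n ∈ ℕ, (Y₁, …, Y_{n+1}) an exchangeable random vector in 𝒴^{n+1}, and Ψ : 𝒴ⁿ × 𝒴 → ℝ a measurable non-conformity measure invariant under permutations of its first argument. For observed data yⁿ ∈ 𝒴ⁿ and candidate value ỹ ∈ 𝒴, define the conformal plausibility contour π(ỹ; yⁿ) = (n+1)^{-1} Σ_{i=1}^{n+1} 1{ T_i(yⁿ, ỹ) ≥ T_{n+1}(yⁿ, ỹ) }, where T_i(yⁿ, ỹ) = Ψ((yⁿ, ỹ)_{−i}, (yⁿ, ỹ)_i), and the consonant upper predictive probability Π̄_{yⁿ}(A) = sup_{ỹ ∈ A} π(ỹ; yⁿ). Then this probabilistic predictor is strongly valid: for every subset A ⊆ 𝒴 and every α ∈ [0,1], the event {Π̄_{Yⁿ}(A) ≤ k_n(α) and Y_{n+1} ∈ A} is contained in {π(Y_{n+1}; Yⁿ) ≤ k_n(α)}, and its outer probability is at most α, where k_n(α) = ⌊(n+1)α⌋/(n+1). (Theorem 2: strong validity of the nonparametric IM / conformal-plus-consonance predictor.) -/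

import Mathlib

open MeasureTheory

/-- The conformal plausibility contour: for observed data `yn ∈ 𝒴ⁿ` and candidate value
`yt ∈ 𝒴`, writing `y^{n+1} = (yn, yt)` (via `Fin.snoc`) and
`T_i = Ψ(y^{n+1}_{-i}, y^{n+1}_i)`, it equals `(n+1)⁻¹ #{i : T_i ≥ T_{n+1}}`. -/
noncomputable def conformalContour {𝒴 : Type*} (n : ℕ)
    (Ψ : (Fin n → 𝒴) → 𝒴 → ℝ) (yn : Fin n → 𝒴) (yt : 𝒴) : ℝ :=
  let y' : Fin (n+1) → 𝒴 := Fin.snoc yn yt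
  ((Finset.univ.filter fun i : Fin (n+1) =>
      Ψ (fun j => y' ((Fin.last n).succAbove j)) (y' (Fin.last n))
        ≤ Ψ (fun j => y' (i.succAbove j)) (y' i)).card : ℝ)
    / ((n:ℝ)+1)

/-!
Write `R_i = #{j : T_j ≥ T_i}` for the rank of the `i`-th conformity score, so that
`π(Y_{n+1}; Yⁿ) = R_{n+1} / (n+1)`. Because `Ψ` is symmetric in its first argument, permuting
the data permutes the ranks, so by exchangeability every `R_i` has the law of `R_{n+1}`. In any
configuration at most `m` indices have rank `≤ m`: the one with the smallest score among them
has every one of them in its rank. Summing the `n+1` equal probabilities therefore gives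
`(n+1) P(R_{n+1} ≤ m) ≤ m`, which with `m = ⌊(n+1)α⌋` is the bound. Consonance does the rest:
if `Y_{n+1} ∈ A` then `Π̄_{Yⁿ}(A) ≥ π(Y_{n+1}; Yⁿ)`.
-/

open Finset
open scoped ENNReal

theorem card_filter_card_le_le {ι α : Type*} [Fintype ι] [LinearOrder α] (T : ι → α) (m : ℕ) :
    #{i | #{j | T i ≤ T j} ≤ m} ≤ m := by
  set S : Finset ι := {i | #{j | T i ≤ T j} ≤ m}
  obtain hS | hS := S.eq_empty_or_nonempty
  · simp [hS]
  obtain ⟨i₀, hi₀, hmin⟩ := S.exists_min_image T hS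
  calc #S ≤ #{j | T i₀ ≤ T j} := card_le_card fun i hi => by simpa using hmin i hi
    _ ≤ m := (mem_filter.mp hi₀).2

theorem Fin.exists_perm_comp_succAbove {n : ℕ} (σ : Equiv.Perm (Fin (n + 1)))
    (i : Fin (n + 1)) : ∃ τ : Equiv.Perm (Fin n), σ ∘ i.succAbove = (σ i).succAbove ∘ τ :=
  ⟨(finSuccAboveEquiv i).trans <|
      (σ.subtypeEquiv fun a => (σ.injective.ne_iff : σ a ≠ σ i ↔ a ≠ i).symm).trans
        (finSuccAboveEquiv (σ i)).symm,
    funext fun j => by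
      simp only [Function.comp_apply, Equiv.trans_apply, Equiv.subtypeEquiv_apply,
        finSuccAboveEquiv_apply]
      exact congrArg Subtype.val ((finSuccAboveEquiv (σ i)).apply_symm_apply
        ⟨σ (i.succAbove j), σ.injective.ne (i.succAbove_ne j)⟩).symm⟩

theorem le_ofReal_of_mul_le_floor {p : ℝ≥0∞} {n : ℕ} {α : ℝ} (hα : 0 ≤ α)
    (h : (n + 1) * p ≤ ⌊((n : ℝ) + 1) * α⌋₊) : p ≤ ENNReal.ofReal α := by
  have hfloor : (⌊((n : ℝ) + 1) * α⌋₊ : ℝ≥0∞) ≤ (n + 1) * ENNReal.ofReal α :=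
    calc (⌊((n : ℝ) + 1) * α⌋₊ : ℝ≥0∞) = ENNReal.ofReal ⌊((n : ℝ) + 1) * α⌋₊ :=
          (ENNReal.ofReal_natCast _).symm
      _ ≤ ENNReal.ofReal (((n : ℝ) + 1) * α) :=
          ENNReal.ofReal_le_ofReal (Nat.floor_le (by positivity))
      _ = (n + 1) * ENNReal.ofReal α := by
          rw [ENNReal.ofReal_mul (by positivity)]
          norm_cast
  exact (ENNReal.mul_le_mul_iff_right (by simp) (by simp)).mp (h.trans hfloor)

section Exchangeable

variable {ι 𝒴 : Type*} [MeasurableSpace 𝒴]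

def Exchangeable (μ : Measure (ι → 𝒴)) : Prop :=
  ∀ σ : Equiv.Perm ι, μ.map (fun y => y ∘ σ) = μ

theorem measurable_precomp {κ : Type*} (f : κ → ι) : Measurable fun y : ι → 𝒴 => y ∘ f :=
  measurable_pi_lambda _ fun k => measurable_pi_apply (f k)

theorem Exchangeable.measure_preimage_comp_perm {μ : Measure (ι → 𝒴)} (hμ : Exchangeable μ)
    (σ : Equiv.Perm ι) {s : Set (ι → 𝒴)} (hs : MeasurableSet s) :
    μ ((fun y => y ∘ σ) ⁻¹' s) = μ s := by
  rw [← Measure.map_apply (measurable_precomp σ) hs, hμ σ]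

open scoped Classical in
theorem sum_measure_le_of_forall_card_le {α : Type*} [MeasurableSpace α] [Fintype ι]
    (μ : Measure α) {B : ι → Set α} (hB : ∀ i, MeasurableSet (B i)) {m : ℕ}
    (hm : ∀ x, #{i | x ∈ B i} ≤ m) :
    ∑ i, μ (B i) ≤ m * μ Set.univ :=
  calc ∑ i, μ (B i) = ∫⁻ x, ∑ i, (B i).indicator 1 x ∂μ := by
        rw [lintegral_finsetSum _ fun i _ => measurable_one.indicator (hB i)]
        simp only [lintegral_indicator_one (hB _)]
    _ ≤ ∫⁻ _, (m : ℝ≥0∞) ∂μ := lintegral_mono fun x => by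
        simp only [Set.indicator_apply, Pi.one_apply, Finset.sum_boole]
        exact_mod_cast hm x
    _ = m * μ Set.univ := lintegral_const _

open scoped Classical in
theorem Exchangeable.card_mul_measure_le [Fintype ι] {μ : Measure (ι → 𝒴)}
    [IsProbabilityMeasure μ] (hμ : Exchangeable μ) {B : ι → Set (ι → 𝒴)}
    (hB : ∀ i, MeasurableSet (B i))
    (hBσ : ∀ (σ : Equiv.Perm ι) i, (fun y => y ∘ σ) ⁻¹' B i = B (σ i)) {m : ℕ}
    (hm : ∀ y, #{i | y ∈ B i} ≤ m) (i₀ : ι) :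
    Fintype.card ι * μ (B i₀) ≤ m := by
  have hB_eq : ∀ i, μ (B i) = μ (B i₀) := fun i => by
    rw [← hμ.measure_preimage_comp_perm (Equiv.swap i i₀) (hB i₀), hBσ,
      Equiv.swap_apply_right]
  calc Fintype.card ι * μ (B i₀) = ∑ i, μ (B i) := by simp [hB_eq]
    _ ≤ m * μ Set.univ := sum_measure_le_of_forall_card_le μ hB hm
    _ = m := by simp

end Exchangeable

section ConformalRank

variable {𝒴 : Type*} {n : ℕ}

/-- The conformity score `T_i`. -/
noncomputable def conformalScore (Ψ : (Fin n → 𝒴) → 𝒴 → ℝ) (i : Fin (n + 1))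
    (y : Fin (n + 1) → 𝒴) : ℝ :=
  Ψ (y ∘ i.succAbove) (y i)

noncomputable def conformalRank (Ψ : (Fin n → 𝒴) → 𝒴 → ℝ) (i : Fin (n + 1))
    (y : Fin (n + 1) → 𝒴) : ℕ :=
  #{j | conformalScore Ψ i y ≤ conformalScore Ψ j y}

theorem conformalContour_eq_conformalRank (Ψ : (Fin n → 𝒴) → 𝒴 → ℝ) (yn : Fin n → 𝒴)
    (yt : 𝒴) :
    conformalContour n Ψ yn yt = conformalRank Ψ (Fin.last n) (Fin.snoc yn yt) / ((n : ℝ) + 1) :=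
  rfl

theorem conformalRank_le (Ψ : (Fin n → 𝒴) → 𝒴 → ℝ) (i : Fin (n + 1)) (y : Fin (n + 1) → 𝒴) :
    conformalRank Ψ i y ≤ n + 1 :=
  (card_filter_le _ _).trans (by simp)

theorem conformalContour_le_one (Ψ : (Fin n → 𝒴) → 𝒴 → ℝ) (yn : Fin n → 𝒴) (yt : 𝒴) :
    conformalContour n Ψ yn yt ≤ 1 := by
  rw [conformalContour_eq_conformalRank, div_le_one (by positivity)]
  exact_mod_cast conformalRank_le Ψ _ _

theorem conformalContour_le_iSup (Ψ : (Fin n → 𝒴) → 𝒴 → ℝ) (yn : Fin n → 𝒴) {A : Set 𝒴}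
    {yt : 𝒴} (hyt : yt ∈ A) :
    conformalContour n Ψ yn yt ≤ ⨆ a : A, conformalContour n Ψ yn a :=
  le_ciSup (f := fun a : A => conformalContour n Ψ yn a)
    ⟨1, Set.forall_mem_range.mpr fun _ => conformalContour_le_one Ψ _ _⟩ ⟨yt, hyt⟩

theorem conformalContour_le_floor_div_iff (Ψ : (Fin n → 𝒴) → 𝒴 → ℝ) (y : Fin (n + 1) → 𝒴)
    {x : ℝ} (hx : 0 ≤ x) :
    conformalContour n Ψ (Fin.init y) (y (Fin.last n)) ≤ ⌊x⌋ / ((n : ℝ) + 1) ↔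
      conformalRank Ψ (Fin.last n) y ≤ ⌊x⌋₊ := by
  rw [conformalContour_eq_conformalRank, Fin.snoc_init_self,
    div_le_div_iff_of_pos_right (by positivity), Nat.le_floor_iff hx]
  exact_mod_cast Int.le_floor (z := (conformalRank Ψ (Fin.last n) y : ℤ)) (a := x)

variable {Ψ : (Fin n → 𝒴) → 𝒴 → ℝ}

theorem conformalScore_comp_perm
    (hsym : ∀ σ : Equiv.Perm (Fin n), ∀ v y, Ψ (v ∘ σ) y = Ψ v y)
    (σ : Equiv.Perm (Fin (n + 1))) (i : Fin (n + 1)) (y : Fin (n + 1) → 𝒴) :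
    conformalScore Ψ i (y ∘ σ) = conformalScore Ψ (σ i) y := by
  obtain ⟨τ, hτ⟩ := Fin.exists_perm_comp_succAbove σ i
  rw [conformalScore, Function.comp_assoc, hτ, ← Function.comp_assoc, hsym]
  rfl

theorem conformalRank_comp_perm
    (hsym : ∀ σ : Equiv.Perm (Fin n), ∀ v y, Ψ (v ∘ σ) y = Ψ v y)
    (σ : Equiv.Perm (Fin (n + 1))) (i : Fin (n + 1)) (y : Fin (n + 1) → 𝒴) :
    conformalRank Ψ i (y ∘ σ) = conformalRank Ψ (σ i) y := by
  simp only [conformalRank, conformalScore_comp_perm hsym]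
  exact card_equiv σ fun j => by simp

variable [MeasurableSpace 𝒴]

theorem measurable_conformalScore (hΨ : Measurable fun p : (Fin n → 𝒴) × 𝒴 => Ψ p.1 p.2)
    (i : Fin (n + 1)) : Measurable (conformalScore Ψ i) :=
  hΨ.comp (f := fun y => (y ∘ i.succAbove, y i))
    ((measurable_precomp i.succAbove).prodMk (measurable_pi_apply i))

theorem measurable_conformalRank (hΨ : Measurable fun p : (Fin n → 𝒴) × 𝒴 => Ψ p.1 p.2)
    (i : Fin (n + 1)) : Measurable (conformalRank Ψ i) := by
  show Measurable fun y => conformalRank Ψ i y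
  simp only [conformalRank, card_filter]
  exact Finset.measurable_sum _ fun j _ => .ite
    (measurableSet_le (measurable_conformalScore hΨ i) (measurable_conformalScore hΨ j))
    measurable_const measurable_const

theorem measurableSet_conformalRank_le
    (hΨ : Measurable fun p : (Fin n → 𝒴) × 𝒴 => Ψ p.1 p.2) (i : Fin (n + 1)) (m : ℕ) :
    MeasurableSet {y | conformalRank Ψ i y ≤ m} :=
  measurable_conformalRank hΨ i measurableSet_Iic

theorem Exchangeable.card_mul_measure_conformalRank_le {μ : Measure (Fin (n + 1) → 𝒴)}
    [IsProbabilityMeasure μ] (hμ : Exchangeable μ)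
    (hΨ : Measurable fun p : (Fin n → 𝒴) × 𝒴 => Ψ p.1 p.2)
    (hsym : ∀ σ : Equiv.Perm (Fin n), ∀ v y, Ψ (v ∘ σ) y = Ψ v y) (m : ℕ) (i : Fin (n + 1)) :
    (n + 1) * μ {y | conformalRank Ψ i y ≤ m} ≤ m := by
  simpa using hμ.card_mul_measure_le (B := fun i => {y | conformalRank Ψ i y ≤ m})
    (fun i => measurableSet_conformalRank_le hΨ i m)
    (fun σ i => by ext y; simp [conformalRank_comp_perm hsym])
    (fun y => by convert card_filter_card_le_le (conformalScore Ψ · y) m using 3; exact Iff.rfl) i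

end ConformalRank

/-- **Theorem 2 (strong validity of the nonparametric IM / conformal-plus-consonance
predictor).** For an exchangeable vector `(Y₁,…,Y_{n+1})` and a symmetric non-conformity
measure `Ψ`, the consonant upper predictive probability
`Π̄_{yⁿ}(A) = sup_{yt ∈ A} π(yt; yⁿ)` built from the conformal plausibility contour is
strongly valid: for every `A ⊆ 𝒴` and `α ∈ [0,1]`, the event
`{Π̄_{Yⁿ}(A) ≤ k_n(α), Y_{n+1} ∈ A}` is contained in `{π(Y_{n+1}; Yⁿ) ≤ k_n(α)}` and its
outer probability is at most `α`, where `k_n(α) = ⌊(n+1)α⌋/(n+1)`. -/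
theorem stmt11
    {Ω 𝒴 : Type*} [MeasurableSpace Ω] [MeasurableSpace 𝒴]
    (Pr : Measure Ω) [IsProbabilityMeasure Pr] (n : ℕ)
    (Y : Fin (n+1) → Ω → 𝒴) (hY : ∀ i, Measurable (Y i))
    (hexch : ∀ σ : Equiv.Perm (Fin (n+1)),
      Measure.map (fun ω => fun i => Y (σ i) ω) Pr
        = Measure.map (fun ω => fun i => Y i ω) Pr)
    (Ψ : (Fin n → 𝒴) → 𝒴 → ℝ)
    (hΨ : Measurable fun p : (Fin n → 𝒴) × 𝒴 => Ψ p.1 p.2)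
    (hsym : ∀ σ : Equiv.Perm (Fin n), ∀ v y, Ψ (v ∘ σ) y = Ψ v y) :
    ∀ A : Set 𝒴, ∀ α ∈ Set.Icc (0:ℝ) 1,
      ({ω | (⨆ yt : A, conformalContour n Ψ (fun j => Y j.castSucc ω) (yt : 𝒴))
              ≤ (⌊((n:ℝ)+1)*α⌋ : ℝ)/((n:ℝ)+1) ∧ Y (Fin.last n) ω ∈ A}
          ⊆ {ω | conformalContour n Ψ (fun j => Y j.castSucc ω) (Y (Fin.last n) ω)
              ≤ (⌊((n:ℝ)+1)*α⌋ : ℝ)/((n:ℝ)+1)}) ∧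
      Pr {ω | (⨆ yt : A, conformalContour n Ψ (fun j => Y j.castSucc ω) (yt : 𝒴))
              ≤ (⌊((n:ℝ)+1)*α⌋ : ℝ)/((n:ℝ)+1) ∧ Y (Fin.last n) ω ∈ A}
        ≤ ENNReal.ofReal α := by
  rintro A α ⟨hα, -⟩
  set Yv : Ω → Fin (n + 1) → 𝒴 := fun ω i => Y i ω
  have hYv : Measurable Yv := measurable_pi_lambda _ hY
  have := Measure.isProbabilityMeasure_map (μ := Pr) hYv.aemeasurable
  have hμ : Exchangeable (Pr.map Yv) := fun σ => by
    rw [Measure.map_map (measurable_precomp σ) hYv]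
    exact hexch σ
  refine ⟨?sub, (measure_mono ?sub).trans ?_⟩
  case sub => exact fun ω ⟨hsup, hA⟩ => (conformalContour_le_iSup Ψ _ hA).trans hsup
  calc _ = Pr.map Yv {y | conformalRank Ψ (Fin.last n) y ≤ ⌊((n : ℝ) + 1) * α⌋₊} := by
        rw [Measure.map_apply hYv (measurableSet_conformalRank_le hΨ _ _)]
        congr 1
        ext ω
        exact conformalContour_le_floor_div_iff Ψ (Yv ω) (by positivity)
    _ ≤ ENNReal.ofReal α :=
        le_ofReal_of_mul_le_floor hα (hμ.card_mul_measure_conformalRank_le hΨ hsym _ _)
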